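/- For any z ∈ ℝ, h > 0, τ ≥ 0, c ∈ ℝ, and w, t > 0 with e^{wt} = 1 + τ/h, the composition of the two one-dimensional ReLU-flows φ_{(-w, c+τ+h)}^t ∘ φ_{(w,c)}^t (where φ_{(w,b)}^t(x) = (e^{wt}(x-b)+b)·1_{x≥b} + x·1_{x≤b}) equals x + τ for all x ≥ c + h, and equals x for all x ≤ c. -/

import Mathlib

/-!
Above its threshold `c` the first flow is the dilation by `e^{wt}` about `c`, and above the
threshold `b' = c + τ + h` the second flow is the contraction by `e^{-wt}` about `b'`. Composing a
dilation and a contraction by inverse factors about two different centres gives the translation by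
`(1 - e^{-wt}) (b' - c) = (1 - h/(τ + h)) (τ + h) = τ`. The point `c + h` is sent exactly to `b'`,
so the whole half-line `x ≥ c + h` lands in the region where the second flow contracts, while
points `x ≤ c` are fixed by both flows.
-/

/-- The explicit time-`t` flow map of `ẋ = w (x - b)₊`. -/
noncomputable def reluFlow (w b t x : ℝ) : ℝ :=
  if b ≤ x then Real.exp (w * t) * (x - b) + b else x

namespace reluFlow

variable {w b t x : ℝ}

theorem eq_self_of_le (hx : x ≤ b) : reluFlow w b t x = x := by
  unfold reluFlow
  split_ifs with hbx
  · rw [le_antisymm hx hbx, sub_self, mul_zero, zero_add]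
  · rfl

theorem eq_of_threshold_le (hx : b ≤ x) : reluFlow w b t x = Real.exp (w * t) * (x - b) + b :=
  if_pos hx

theorem neg_reluFlow_eq_add {b' : ℝ} (hx : b ≤ x) (hb' : b' ≤ reluFlow w b t x) :
    reluFlow (-w) b' t (reluFlow w b t x) = x + (1 - Real.exp (-(w * t))) * (b' - b) := by
  rw [eq_of_threshold_le hb', eq_of_threshold_le hx, neg_mul, Real.exp_neg]
  field_simp
  ring

end reluFlow

theorem stmt1_general (h τ c w t : ℝ) (hh : 0 < h)
    (hwt : Real.exp (w * t) = 1 + τ / h) :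
    (∀ x : ℝ, c + h ≤ x → reluFlow (-w) (c + τ + h) t (reluFlow w c t x) = x + τ) ∧
    (∀ x : ℝ, x ≤ c → reluFlow (-w) (c + τ + h) t (reluFlow w c t x) = x) := by
  have hE : Real.exp (w * t) * h = τ + h := by
    rw [hwt]
    field_simp
    ring
  have hτh : 0 < τ + h := hE ▸ mul_pos (Real.exp_pos _) hh
  refine ⟨fun x hx => ?_, fun x hx => ?_⟩
  · have hcx : c ≤ x := by linarith
    have hlands : c + τ + h ≤ reluFlow w c t x := by
      rw [reluFlow.eq_of_threshold_le hcx]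
      nlinarith [Real.exp_pos (w * t)]
    rw [reluFlow.neg_reluFlow_eq_add hcx hlands, Real.exp_neg,
      show Real.exp (w * t) = (τ + h) / h by rw [← hE]; field_simp]
    field_simp
    ring
  · rw [reluFlow.eq_self_of_le hx, reluFlow.eq_self_of_le (by linarith)]

/-- for `h > 0`, `τ ≥ 0`, `c ∈ ℝ`, `w, t > 0` with `e^{wt} = 1 + τ/h`, the
composition `φ_{(-w, c+τ+h)}ᵗ ∘ φ_{(w,c)}ᵗ` equals `x + τ` for `x ≥ c + h` and `x` for
`x ≤ c`. -/
theorem stmt1 (h τ c w t : ℝ) (hh : 0 < h) (hτ : 0 ≤ τ) (hw : 0 < w) (ht : 0 < t)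
    (hwt : Real.exp (w * t) = 1 + τ / h) :
    (∀ x : ℝ, c + h ≤ x → reluFlow (-w) (c + τ + h) t (reluFlow w c t x) = x + τ) ∧
    (∀ x : ℝ, x ≤ c → reluFlow (-w) (c + τ + h) t (reluFlow w c t x) = x) :=
  stmt1_general h τ c w t hh hwt
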